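/- With the combinatorial model of the Kirillov–Reshetikhin crystal B_s = B^{1,s} of type D_{n+1}^{(2)}, the maps Ψ_j, and the weight sets wt B(kθ) as in the context, for every 1 ≤ k ≤ l one has (⋃_{j=1}^{n−1} Ψ_j(B((k−2)θ) ⊂ B_{l−2})) ∪ Ψ_n(B((k−1)θ) ⊂ B_{l−1}) = { b ∈ B(kθ) ⊂ B_l : wt b ∈ wt B((k−1)θ) } (with the convention B(jθ) = ∅ for j < 0). -/
import Mathlib


/-- Model of the KR crystal `B^{1,s}` of type `D_{n+1}^{(2)}`: a tuple
`(x₁, …, x_n, x₀, x̄_n, …, x̄₁)`, encoded as `b = (x, x₀, x̄)` with `x = b.1`,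
`x₀ = b.2.1` and `x̄ = b.2.2`. -/
abbrev DCrystal (n : ℕ) := (Fin n → ℕ) × ℕ × (Fin n → ℕ)

/-- `∑_{j=1}^{n} (x_j + x̄_j) + x₀`. -/
def dsum (n : ℕ) (b : DCrystal n) : ℕ := (∑ j, (b.1 j + b.2.2 j)) + b.2.1

/-- Membership in `B_s = B^{1,s}`: `x₀ ∈ {0, 1}` and the coordinate sum is at most `s`. -/
def inBD (n s : ℕ) (b : DCrystal n) : Prop := b.2.1 ≤ 1 ∧ dsum n b ≤ s

/-- The weight `wt b = (x₁ − x̄₁, …, x_n − x̄_n)`. -/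
def wtDof (n : ℕ) (b : DCrystal n) : Fin n → ℤ := fun j => (b.1 j : ℤ) - (b.2.2 j : ℤ)

/-- `f̃_0` on `B_s`: `x₁ ↦ x₁ + 1` if `x₁ ≥ x̄₁`, and `x̄₁ ↦ x̄₁ − 1` if `x₁ < x̄₁`;
the result is `0` (`none`) if the resulting tuple does not lie in `B_s`. -/
def fD0 (n : ℕ) (hn : 0 < n) (s : ℕ) (b : DCrystal n) : Option (DCrystal n) :=
  let i0 : Fin n := ⟨0, hn⟩
  if b.2.2 i0 ≤ b.1 i0 then
    if dsum n b + 1 ≤ s then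
      some (Function.update b.1 i0 (b.1 i0 + 1), b.2.1, b.2.2)
    else none
  else
    some (b.1, b.2.1, Function.update b.2.2 i0 (b.2.2 i0 - 1))

/-- `f̃_i` for `1 ≤ i ≤ n−1` (here `i = i₀ + 1`): `(x_i, x_{i+1}) ↦ (x_i − 1, x_{i+1} + 1)`
if `x_{i+1} ≥ x̄_{i+1}`, and `(x̄_{i+1}, x̄_i) ↦ (x̄_{i+1} − 1, x̄_i + 1)` otherwise;
the result is `0` (`none`) if a coordinate would become negative. -/
def fDi (n i₀ : ℕ) (h : i₀ + 1 < n) (b : DCrystal n) : Option (DCrystal n) :=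
  let a : Fin n := ⟨i₀, by omega⟩
  let a' : Fin n := ⟨i₀ + 1, h⟩
  if b.2.2 a' ≤ b.1 a' then
    if 0 < b.1 a then
      some (Function.update (Function.update b.1 a (b.1 a - 1)) a' (b.1 a' + 1), b.2)
    else none
  else
    if 0 < b.2.2 a' then
      some (b.1, b.2.1,
        Function.update (Function.update b.2.2 a' (b.2.2 a' - 1)) a (b.2.2 a + 1))
    else none

/-- `f̃_n`: `(x_n, x₀) ↦ (x_n − 1, x₀ + 1)` if `x₀ = 0` (the result being `0` if
`x_n = 0`), and `(x₀, x̄_n) ↦ (x₀ − 1, x̄_n + 1)` if `x₀ = 1`. -/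
def fDn (n : ℕ) (hn : 0 < n) (b : DCrystal n) : Option (DCrystal n) :=
  let a : Fin n := ⟨n - 1, by omega⟩
  if b.2.1 = 0 then
    if 0 < b.1 a then
      some (Function.update b.1 a (b.1 a - 1), 1, b.2.2)
    else none
  else
    some (b.1, b.2.1 - 1, Function.update b.2.2 a (b.2.2 a + 1))

/-- `Ψ_j : B_{l−2} → B_l` for `1 ≤ j ≤ n−1` adds `1` to both `x_j` and `x̄_j`
(here the index `j` is `a + 1` for `a : Fin n`). -/
def PsiJ (n : ℕ) (a : Fin n) (b : DCrystal n) : DCrystal n :=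
  (Function.update b.1 a (b.1 a + 1), b.2.1, Function.update b.2.2 a (b.2.2 a + 1))

/-- `Ψ_n : B_{l−1} → B_l`: replaces `x₀` by `x₀ + 1` if `x₀ = 0`, and replaces
`(x_n, x₀, x̄_n)` by `(x_n + 1, x₀ − 1, x̄_n + 1)` if `x₀ = 1`. -/
def PsiN (n : ℕ) (hn : 0 < n) (b : DCrystal n) : DCrystal n :=
  let a : Fin n := ⟨n - 1, by omega⟩
  if b.2.1 = 0 then (b.1, b.2.1 + 1, b.2.2)
  else (Function.update b.1 a (b.1 a + 1), b.2.1 - 1, Function.update b.2.2 a (b.2.2 a + 1))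

/-- Type `Bₙ` weight membership: `m ∈ wt B(kθ)` (θ = e₁); empty for `k < 0`. -/
def wtB (n : ℕ) (k : ℤ) (m : Fin n → ℤ) : Prop :=
  0 ≤ k ∧ ∃ τ : Equiv.Perm (Fin n), ∃ ε : Fin n → ℤ,
    (∀ j, ε j = 1 ∨ ε j = -1) ∧
    (∀ i j : Fin n, i ≤ j → ε j * m (τ j) ≤ ε i * m (τ i)) ∧
    (∀ j, 0 ≤ ε j * m (τ j)) ∧
    (∀ i : ℕ, 1 ≤ i → i ≤ n →
      ∑ j ∈ Finset.univ.filter (fun j : Fin n => (j : ℕ) < i), ε j * m (τ j) ≤ k)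


lemma sum_update_add {n : ℕ} (f : Fin n → ℕ) (a : Fin n) (c : ℕ) :
    ∑ j, Function.update f a (f a + c) j = (∑ j, f j) + c := by
  have h : ∀ j, Function.update f a (f a + c) j = f j + if j = a then c else 0 := by
    intro j
    rcases eq_or_ne j a with rfl | h
    · simp
    · simp [Function.update_of_ne h, h]
  rw [Finset.sum_congr rfl (fun j _ => h j), Finset.sum_add_distrib,
    Finset.sum_ite_eq' Finset.univ a (fun _ => c)]
  simp

lemma wtB_iff {n : ℕ} (hn : 1 ≤ n) (K : ℤ) (m : Fin n → ℤ) :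
    wtB n K m ↔ 0 ≤ K ∧ ∑ j, |m j| ≤ K := by
  constructor
  · rintro ⟨hK, τ, ε, hε, _, hpos, hsum⟩
    refine ⟨hK, ?_⟩
    have h := hsum n hn le_rfl
    have hfil : Finset.univ.filter (fun j : Fin n => (j : ℕ) < n) = Finset.univ := by
      ext j; simp [j.isLt]
    rw [hfil] at h
    calc ∑ j, |m j| = ∑ j, |m (τ j)| := (Equiv.sum_comp τ (fun j => |m j|)).symm
      _ = ∑ j, ε j * m (τ j) := by
          refine Finset.sum_congr rfl (fun j _ => ?_)
          have := hpos j
          rcases hε j with h1 | h1 <;> rw [h1] at this ⊢ <;>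
            simp at this ⊢ <;> omega
      _ ≤ K := h
  · rintro ⟨hK, hsum⟩
    refine ⟨hK, ?_⟩
    set f : Fin n → ℤ := fun j => |m j| with hf
    set τ : Equiv.Perm (Fin n) := (Fin.revPerm).trans (Tuple.sort f) with hτ
    have h1 : ∀ j, (if 0 ≤ m (τ j) then (1:ℤ) else -1) * m (τ j) = |m (τ j)| := by
      intro j
      rcases le_or_gt 0 (m (τ j)) with h | h
      · rw [if_pos h, one_mul, abs_of_nonneg h]
      · rw [if_neg (not_le.mpr h), abs_of_neg h]; ring
    refine ⟨τ, fun j => if 0 ≤ m (τ j) then 1 else -1, fun j => by dsimp only; split <;> simp,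
      ?_, ?_, ?_⟩
    · intro i j hij
      simp only [h1]
      have : (j : Fin n).rev ≤ i.rev := Fin.rev_le_rev.mpr hij
      exact Tuple.monotone_sort f this
    · intro j
      rw [h1]; exact abs_nonneg _
    · intro i _ _
      calc ∑ j ∈ Finset.univ.filter (fun j : Fin n => (j : ℕ) < i),
            (if 0 ≤ m (τ j) then (1:ℤ) else -1) * m (τ j)
          = ∑ j ∈ Finset.univ.filter (fun j : Fin n => (j : ℕ) < i), |m (τ j)| := by
            exact Finset.sum_congr rfl (fun j _ => h1 j)
        _ ≤ ∑ j, |m (τ j)| := by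
            refine Finset.sum_le_sum_of_subset_of_nonneg (Finset.filter_subset _ _)
              (fun j _ _ => abs_nonneg _)
        _ = ∑ j, |m j| := Equiv.sum_comp τ (fun j => |m j|)
        _ ≤ K := hsum


lemma psiJ_dsum {n : ℕ} (a : Fin n) (c : DCrystal n) :
    dsum n (PsiJ n a c) = dsum n c + 2 := by
  simp only [dsum, PsiJ, Finset.sum_add_distrib, sum_update_add]
  omega

lemma psiJ_wt {n : ℕ} (a : Fin n) (c : DCrystal n) :
    wtDof n (PsiJ n a c) = wtDof n c := by
  funext j
  simp only [wtDof, PsiJ]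
  rcases eq_or_ne j a with rfl | h
  · simp only [Function.update_self]; push_cast; ring
  · simp [Function.update_of_ne h]

lemma psiN_dsum {n : ℕ} (hn : 0 < n) (c : DCrystal n) :
    dsum n (PsiN n hn c) = dsum n c + 1 := by
  simp only [dsum, PsiN]
  split
  · dsimp only; omega
  · dsimp only
    rw [Finset.sum_add_distrib, sum_update_add, sum_update_add, Finset.sum_add_distrib]
    omega

lemma psiN_wt {n : ℕ} (hn : 0 < n) (c : DCrystal n) :
    wtDof n (PsiN n hn c) = wtDof n c := by
  funext j
  simp only [wtDof, PsiN]
  split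
  · rfl
  · rcases eq_or_ne j ⟨n - 1, by omega⟩ with rfl | h
    · simp only [Function.update_self]; push_cast; ring
    · simp [Function.update_of_ne h]

lemma abs_wt_sum {n : ℕ} (c : DCrystal n) :
    ∑ j, |wtDof n c j| =
      (∑ j, ((c.1 j : ℤ) + (c.2.2 j : ℤ))) - 2 * ∑ j, (min (c.1 j) (c.2.2 j) : ℤ) := by
  rw [Finset.mul_sum, ← Finset.sum_sub_distrib]
  refine Finset.sum_congr rfl (fun j _ => ?_)
  simp only [wtDof]
  rcases le_or_gt ((c.1 j : ℤ)) ((c.2.2 j : ℤ)) with h | h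
  · rw [min_eq_left h, abs_of_nonpos (by omega)]; ring
  · rw [min_eq_right h.le, abs_of_nonneg (by omega)]; ring

lemma dsum_cast {n : ℕ} (c : DCrystal n) :
    (dsum n c : ℤ) = (∑ j, ((c.1 j : ℤ) + (c.2.2 j : ℤ))) + c.2.1 := by
  simp only [dsum]; push_cast; ring

lemma abs_wt_le {n : ℕ} (c : DCrystal n) :
    ∑ j, |wtDof n c j| ≤ (dsum n c : ℤ) - c.2.1 := by
  rw [abs_wt_sum, dsum_cast]
  have : (0:ℤ) ≤ ∑ j, (min (c.1 j) (c.2.2 j) : ℤ) :=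
    Finset.sum_nonneg (fun j _ => by positivity)
  omega

theorem statement_17 (n l : ℕ) (hn : 2 ≤ n) (hl : 2 ≤ l)
    (k : ℕ) (hk1 : 1 ≤ k) (hkl : k ≤ l) :
    {b : DCrystal n |
        (∃ a : Fin n, (a : ℕ) + 1 < n ∧ ∃ b₀ : DCrystal n,
          b₀.2.1 ≤ 1 ∧ (dsum n b₀ : ℤ) = (k : ℤ) - 2 ∧ PsiJ n a b₀ = b) ∨
        (∃ b₀ : DCrystal n,
          b₀.2.1 ≤ 1 ∧ (dsum n b₀ : ℤ) = (k : ℤ) - 1 ∧ PsiN n (by omega) b₀ = b)}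
      = {b : DCrystal n |
          b.2.1 ≤ 1 ∧ dsum n b = k ∧ wtB n ((k : ℤ) - 1) (wtDof n b)} := by
  have hn1 : 1 ≤ n := by omega
  have hn0 : 0 < n := by omega
  ext b
  simp only [Set.mem_setOf_eq]
  constructor
  · rintro (⟨a, ha, b₀, hb1, hb2, rfl⟩ | ⟨b₀, hb1, hb2, rfl⟩)
    · have hd := psiJ_dsum a b₀
      refine ⟨hb1, by omega, ?_⟩
      rw [wtB_iff hn1]
      refine ⟨by omega, ?_⟩
      rw [psiJ_wt]
      calc ∑ j, |wtDof n b₀ j| ≤ (dsum n b₀ : ℤ) - b₀.2.1 := abs_wt_le b₀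
        _ ≤ (k : ℤ) - 1 := by omega
    · have hd := psiN_dsum hn0 b₀
      refine ⟨?_, by omega, ?_⟩
      · simp only [PsiN]; split <;> simp <;> omega
      · rw [wtB_iff hn1]
        refine ⟨by omega, ?_⟩
        rw [psiN_wt]
        have hx0 : b₀.2.1 = 0 ∨ b₀.2.1 = 1 := by omega
        have := abs_wt_le b₀
        rcases hx0 with h | h
        · -- x₀ = 0 : abs ≤ dsum b₀ = k - 1
          omega
        · -- x₀ = 1 : need ≤ k - 2, use min at last index... but abs_wt_le gives dsum - 1 = k - 2
          omega
  · rintro ⟨hb1, hb2, hw⟩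
    obtain ⟨x, x0, y⟩ := b
    rw [wtB_iff hn1] at hw
    obtain ⟨-, habs⟩ := hw
    rcases Nat.le_one_iff_eq_zero_or_eq_one.mp hb1 with h0 | h1
    · -- x₀ = 0
      subst h0
      have hS : ∑ j, |wtDof n ((x, 0, y) : DCrystal n) j|
          = (∑ j, ((x j : ℤ) + (y j : ℤ))) - 2 * ∑ j, (min (x j) (y j) : ℤ) :=
        abs_wt_sum (x, 0, y)
      have hd : ((dsum n ((x, 0, y) : DCrystal n) : ℕ) : ℤ)
          = (∑ j, ((x j : ℤ) + (y j : ℤ))) + 0 := dsum_cast (x, 0, y)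
      have hM : (1 : ℤ) ≤ ∑ j, (min (x j) (y j) : ℤ) := by omega
      obtain ⟨j, hj⟩ : ∃ j, 0 < min (x j) (y j) := by
        by_contra hcon
        push_neg at hcon
        have hz : ∑ j, (min (x j) (y j) : ℤ) = 0 :=
          Finset.sum_eq_zero (fun j _ => by have := hcon j; omega)
        omega
      have hx1 : 1 ≤ x j := by omega
      have hy1 : 1 ≤ y j := by omega
      by_cases hcase : (j : ℕ) + 1 < n
      · left
        set b₀ : DCrystal n :=
          (Function.update x j (x j - 1), 0, Function.update y j (y j - 1)) with hb₀
        have hP : PsiJ n j b₀ = (x, 0, y) := by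
          simp only [PsiJ, hb₀, Function.update_idem, Function.update_self]
          rw [Nat.sub_add_cancel hx1, Nat.sub_add_cancel hy1,
            Function.update_eq_self, Function.update_eq_self]
        have hd2 := psiJ_dsum j b₀
        rw [hP] at hd2
        exact ⟨j, hcase, b₀, by simp [hb₀], by omega, hP⟩
      · right
        set b₀ : DCrystal n :=
          (Function.update x j (x j - 1), 1, Function.update y j (y j - 1)) with hb₀
        have hje : (⟨n - 1, by omega⟩ : Fin n) = j := by
          have := j.isLt
          exact Fin.ext (by simp; omega)
        have hP : PsiN n hn0 b₀ = (x, 0, y) := by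
          simp only [PsiN, hb₀]
          rw [if_neg (by norm_num), hje]
          simp only [Function.update_idem, Function.update_self]
          rw [Nat.sub_add_cancel hx1, Nat.sub_add_cancel hy1,
            Function.update_eq_self, Function.update_eq_self]
        have hd2 := psiN_dsum hn0 b₀
        rw [hP] at hd2
        exact ⟨b₀, by simp [hb₀], by omega, hP⟩
    · -- x₀ = 1
      subst h1
      right
      refine ⟨(x, 0, y), by norm_num, ?_, ?_⟩
      · have : dsum n ((x, 0, y) : DCrystal n) + 1 = dsum n (x, 1, y) := by
          simp [dsum]
        omega
      · simp [PsiN]
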